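/- Fix d ≥ 1 and let s₀ > (d+1)/2. For infinite matrices A = (A^{[i]}_{[j]}(ℓ)) indexed by i,j ∈ ℕ, ℓ ∈ ℤ^d with 2×2 complex blocks, define the s-decay norm ‖A‖^s_{s,s} = (Σ_{ℓ∈ℤ^d, h∈ℕ} ⟨ℓ,h⟩^{2s} sup_{|i−j|=h} ‖A^{[i]}_{[j]}(ℓ)‖²)^{1/2}, where ⟨ℓ,h⟩ = max{|ℓ|, h, 1} and block products are convolved: (AB)^{[i]}_{[j]}(ℓ) = Σ_{k,ℓ'} A^{[i]}_{[k]}(ℓ−ℓ') B^{[k]}_{[j]}(ℓ'). Then for s ≥ s₀ there is C(s) with ‖AB‖^s_{s,s} ≤ C(s)(‖A‖^{s₀}_{s₀,s₀}‖B‖^s_{s,s} + ‖A‖^s_{s,s}‖B‖^{s₀}_{s₀,s₀}). -/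

import Mathlib

open scoped ENNReal

/-- Operator norm of a `2×2` complex block. -/
noncomputable def blockNorm (M : Matrix (Fin 2) (Fin 2) ℂ) : ℝ≥0∞ :=
  (‖Matrix.toEuclideanCLM (𝕜 := ℂ) M‖₊ : ℝ≥0∞)

/-- `⟨ℓ,h⟩ = max(|ℓ|, h, 1)`. -/
def wt {d : ℕ} (ℓ : Fin d → ℤ) (h : ℕ) : ℕ :=
  max (max (Finset.univ.sup fun i => (ℓ i).natAbs) h) 1

/-- The `s`-decay norm of a `θ`-dependent infinite matrix of `2×2` blocks. -/
noncomputable def sDecayNorm (d : ℕ) (s : ℝ)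
    (A : (Fin d → ℤ) → ℕ → ℕ → Matrix (Fin 2) (Fin 2) ℂ) : ℝ≥0∞ :=
  (∑' p : (Fin d → ℤ) × ℕ,
      (wt p.1 p.2 : ℝ≥0∞) ^ (2 * s) *
        ⨆ ij : {q : ℕ × ℕ // Nat.dist q.1 q.2 = p.2},
          (blockNorm (A p.1 ij.1.1 ij.1.2)) ^ 2) ^ (1/2 : ℝ)

/-- The (convolved) product of two `θ`-dependent infinite matrices. -/
noncomputable def matProd (d : ℕ)
    (A B : (Fin d → ℤ) → ℕ → ℕ → Matrix (Fin 2) (Fin 2) ℂ) :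
    (Fin d → ℤ) → ℕ → ℕ → Matrix (Fin 2) (Fin 2) ℂ :=
  fun ℓ i j => ∑' p : ℕ × (Fin d → ℤ), A (ℓ - p.2) i p.1 * B p.2 p.1 j

/-!
Write `a (ℓ, h)` for the largest block of `A ℓ` on the diagonals `|i - j| = h`, so that
`‖A‖ₛ` is the `⟨ℓ, h⟩ ^ s`-weighted `ℓ²` norm of `a`. The blocks of `A B` are bounded by the
convolution `∑ k ℓ', a (ℓ - ℓ', |i - k|) * b (ℓ', |k - j|)`, and the triangle inequality
`⟨ℓ, |i - j|⟩ ≤ ⟨ℓ - ℓ', |i - k|⟩ + ⟨ℓ', |k - j|⟩` moves the weight `⟨ℓ, |i - j|⟩ ^ s` onto one of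
the two factors. Writing the other factor as `⟨·⟩ ^ s₀ b * ⟨·⟩ ^ (-s₀)`, Cauchy–Schwarz in `(k, ℓ')`
costs `∑ ⟨ℓ, h⟩ ^ (-2 s₀)`, which is finite because `2 s₀ > d + 1`. What remains is a Young
inequality: the convolution in `ℓ` is handled by translation invariance, and in the matrix indices
`k ↦ (|i - k|, |k - j|)` is at most two-to-one onto pairs that each lie on at most two diagonals.
-/

open scoped NNReal

namespace ENNReal

theorem tsum_comp_le_two_mul_tsum {α β : Type*} (f : β → ℝ≥0∞) (e : α → β) (s : Set α)
    (hs : s.InjOn e) (hsc : sᶜ.InjOn e) : ∑' x, f (e x) ≤ 2 * ∑' y, f y := by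
  rw [← Summable.tsum_add_tsum_compl (s := s) ENNReal.summable ENNReal.summable, two_mul]
  exact add_le_add (tsum_comp_le_tsum_of_injective (s.injOn_iff_injective.1 hs) f)
    (tsum_comp_le_tsum_of_injective (sᶜ.injOn_iff_injective.1 hsc) f)

theorem tsum_tsum_sub_mul {G : Type*} [AddGroup G] (U V : G → ℝ≥0∞) :
    ∑' x, ∑' y, U (x - y) * V y = (∑' x, U x) * ∑' y, V y := by
  rw [ENNReal.tsum_comm, ← ENNReal.tsum_mul_left]
  refine tsum_congr fun y => ?_
  rw [ENNReal.tsum_mul_right, ← (Equiv.subRight y).tsum_eq U]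
  rfl

theorem tsum_pi_fin_prod {α : Type*} (g : α → ℝ≥0∞) (n : ℕ) :
    ∑' x : Fin n → α, ∏ i, g (x i) = (∑' a, g a) ^ n := by
  induction n with
  | zero => simp
  | succ n ih =>
    rw [← (Fin.consEquiv fun _ => α).tsum_eq,
      ENNReal.tsum_prod (f := fun a x => ∏ i, g (Fin.consEquiv (fun _ => α) (a, x) i)),
      pow_succ', ← ih, ← ENNReal.tsum_mul_right]
    refine tsum_congr fun a => ?_
    rw [← ENNReal.tsum_mul_left]
    exact tsum_congr fun x => by simp [Fin.consEquiv, Fin.prod_univ_succ]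

theorem tsum_max_one_rpow_inv_ne_top {t : ℝ} (ht : 1 < t) :
    ∑' n : ℕ, (((max n 1 : ℕ) : ℝ≥0∞) ^ t)⁻¹ ≠ ⊤ := by
  have hterm (n : ℕ) : (((max n 1 : ℕ) : ℝ≥0∞) ^ t)⁻¹ = ↑((((max n 1 : ℕ) : ℝ≥0) ^ t)⁻¹) := by
    have h0 : ((max n 1 : ℕ) : ℝ≥0) ≠ 0 := by simp
    rw [coe_inv (by positivity), coe_rpow_of_ne_zero h0, coe_natCast]
  simp_rw [hterm]
  refine tsum_coe_ne_top_iff_summable.2 ((NNReal.summable_nat_add_iff 1).1 ?_)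
  simpa using (NNReal.summable_nat_add_iff 1).2 (NNReal.summable_rpow_inv.2 ht)

theorem tsum_mul_sq_le {α : Type*} (f g : α → ℝ≥0∞) :
    (∑' x, f x * g x) ^ 2 ≤ (∑' x, f x ^ 2) * ∑' x, g x ^ 2 := by
  let : MeasurableSpace α := ⊤
  have h := lintegral_mul_le_Lp_mul_Lq MeasureTheory.Measure.count
    Real.HolderConjugate.two_two (measurable_from_top (f := f)).aemeasurable
    (measurable_from_top (f := g)).aemeasurable
  simp only [MeasureTheory.lintegral_count, Pi.mul_apply] at h
  calc (∑' x, f x * g x) ^ 2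
      ≤ ((∑' x, f x ^ (2 : ℝ)) ^ (1 / 2 : ℝ) * (∑' x, g x ^ (2 : ℝ)) ^ (1 / 2 : ℝ)) ^ 2 := by
        gcongr
    _ = (∑' x, f x ^ 2) * ∑' x, g x ^ 2 := by
        simp only [mul_pow, ← rpow_natCast, ← rpow_mul]
        norm_num

theorem rpow_one_half_sq (x : ℝ≥0∞) : (x ^ (1 / 2 : ℝ)) ^ 2 = x := by
  rw [← rpow_natCast, ← rpow_mul]
  norm_num

theorem add_sq_le_two_mul (a b : ℝ≥0∞) : (a + b) ^ 2 ≤ 2 * (a ^ 2 + b ^ 2) := by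
  simpa [show (2 : ℝ) - 1 = 1 by norm_num] using rpow_add_le_mul_rpow_add_rpow a b one_le_two

theorem add_rpow_le_two_rpow_mul {x y : ℝ≥0∞} {r : ℝ} (hr : 0 ≤ r) :
    (x + y) ^ r ≤ 2 ^ r * (x ^ r + y ^ r) := by
  calc (x + y) ^ r ≤ (2 * max x y) ^ r := by
        gcongr
        rw [two_mul]
        exact add_le_add (le_max_left _ _) (le_max_right _ _)
    _ = 2 ^ r * max x y ^ r := mul_rpow_of_nonneg _ _ hr
    _ ≤ 2 ^ r * (x ^ r + y ^ r) := by
        gcongr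
        rcases le_total x y with h | h
        · rw [max_eq_right h]; exact le_add_self
        · rw [max_eq_left h]; exact le_self_add

end ENNReal

theorem tsum_iSup_dist_sum_le (f g : ℕ → ℝ≥0∞) :
    ∑' h, ⨆ ij : {q : ℕ × ℕ // Nat.dist q.1 q.2 = h},
        ∑' k, f (Nat.dist ij.1.1 k) * g (Nat.dist k ij.1.2) ≤
      4 * ((∑' a, f a) * ∑' b, g b) := by
  let ψ (h : ℕ) (x : ℕ × ℕ) : ℝ≥0∞ :=
    if h = x.1 + x.2 ∨ h = Nat.dist x.1 x.2 then f x.1 * g x.2 else 0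
  -- `k ↦ (|i - k|, |k - j|)` is at most two-to-one, and lands where `ψ (|i - j|)` is `f * g`.
  have hk (i j : ℕ) : ∑' k, f (Nat.dist i k) * g (Nat.dist k j) ≤
      2 * ∑' x, ψ (Nat.dist i j) x := by
    have hψ (k : ℕ) : f (Nat.dist i k) * g (Nat.dist k j) =
        ψ (Nat.dist i j) (Nat.dist i k, Nat.dist k j) := by
      simp only [ψ]
      rw [if_pos (by simp only [Nat.dist]; omega)]
    simp_rw [hψ]
    refine ENNReal.tsum_comp_le_two_mul_tsum _ _ {k | k ≤ i} ?_ ?_ <;>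
    · intro a ha b hb hab
      simp only [Prod.mk.injEq, Nat.dist, Set.mem_ofPred_eq, Set.mem_compl_iff] at ha hb hab
      omega
  -- each pair `(a, b)` lies on at most two diagonals, `h = a + b` and `h = |a - b|`.
  have hh (x : ℕ × ℕ) : ∑' h, ψ h x ≤ 2 * (f x.1 * g x.2) :=
    calc ∑' h, ψ h x ≤ ∑' h, ((if h = x.1 + x.2 then f x.1 * g x.2 else 0) +
          if h = Nat.dist x.1 x.2 then f x.1 * g x.2 else 0) :=
          ENNReal.tsum_le_tsum fun h => by simp only [ψ]; split_ifs <;> simp_all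
      _ = 2 * (f x.1 * g x.2) := by rw [ENNReal.tsum_add, tsum_ite_eq, tsum_ite_eq, two_mul]
  calc ∑' h, ⨆ ij : {q : ℕ × ℕ // Nat.dist q.1 q.2 = h},
        ∑' k, f (Nat.dist ij.1.1 k) * g (Nat.dist k ij.1.2)
      ≤ ∑' h, 2 * ∑' x, ψ h x :=
        ENNReal.tsum_le_tsum fun h => iSup_le fun ⟨(i, j), hij⟩ => hij ▸ hk i j
    _ = 2 * ∑' x, ∑' h, ψ h x := by rw [ENNReal.tsum_mul_left, ENNReal.tsum_comm]
    _ ≤ 2 * ∑' x : ℕ × ℕ, 2 * (f x.1 * g x.2) := by gcongr with x; exact hh x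
    _ = 4 * ((∑' a, f a) * ∑' b, g b) := by
        rw [ENNReal.tsum_mul_left, ← mul_assoc, ENNReal.tsum_prod (f := fun a b => f a * g b)]
        simp_rw [ENNReal.tsum_mul_left, ENNReal.tsum_mul_right]
        norm_num

theorem blockNorm_mul_le (M N : Matrix (Fin 2) (Fin 2) ℂ) :
    blockNorm (M * N) ≤ blockNorm M * blockNorm N := by
  simp only [blockNorm, map_mul, ← ENNReal.coe_mul]
  exact ENNReal.coe_le_coe.2 (nnnorm_mul_le _ _)

theorem blockNorm_tsum_le {ι : Type*} (f : ι → Matrix (Fin 2) (Fin 2) ℂ) :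
    blockNorm (∑' i, f i) ≤ ∑' i, blockNorm (f i) := by
  by_cases hf : Summable f
  · let φ : Matrix (Fin 2) (Fin 2) ℂ →L[ℂ] _ := LinearMap.toContinuousLinearMap
      (Matrix.toEuclideanCLM (𝕜 := ℂ) (n := Fin 2)).toAlgEquiv.toLinearMap
    calc blockNorm (∑' i, f i) = ‖∑' i, φ (f i)‖ₑ := by rw [← φ.map_tsum hf]; rfl
      _ ≤ ∑' i, ‖φ (f i)‖ₑ := enorm_tsum_le_tsum_enorm (f := fun i => φ (f i))
      _ = ∑' i, blockNorm (f i) := rfl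
  · simp [tsum_eq_zero_of_not_summable hf, blockNorm]

section

variable {d : ℕ}

theorem wt_add_le (ℓ₁ ℓ₂ : Fin d → ℤ) (h₁ h₂ : ℕ) :
    wt (ℓ₁ + ℓ₂) (h₁ + h₂) ≤ wt ℓ₁ h₁ + wt ℓ₂ h₂ := by
  have hsup : (Finset.univ.sup fun i => ((ℓ₁ + ℓ₂) i).natAbs) ≤
      (Finset.univ.sup fun i => (ℓ₁ i).natAbs) + Finset.univ.sup fun i => (ℓ₂ i).natAbs :=
    Finset.sup_le fun i hi => (Int.natAbs_add_le _ _).trans <|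
      add_le_add (Finset.le_sup (f := fun i => (ℓ₁ i).natAbs) hi)
        (Finset.le_sup (f := fun i => (ℓ₂ i).natAbs) hi)
  simp only [wt]
  omega

theorem wt_mono_right (ℓ : Fin d → ℤ) {h h' : ℕ} (hh : h ≤ h') : wt ℓ h ≤ wt ℓ h' := by
  simp only [wt]
  omega

theorem max_natAbs_one_le_wt (ℓ : Fin d → ℤ) (h : ℕ) (i : Fin d) :
    max (ℓ i).natAbs 1 ≤ wt ℓ h := by
  have := Finset.le_sup (f := fun i => (ℓ i).natAbs) (Finset.mem_univ i)
  simp only [wt]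
  omega

theorem max_one_le_wt (ℓ : Fin d → ℤ) (h : ℕ) : max h 1 ≤ wt ℓ h := by
  simp only [wt]
  omega

noncomputable def weight (p : (Fin d → ℤ) × ℕ) : ℝ≥0∞ := wt p.1 p.2

theorem weight_pos (p : (Fin d → ℤ) × ℕ) : 0 < weight p := by
  simp [weight, wt]

theorem weight_ne_top (p : (Fin d → ℤ) × ℕ) : weight p ≠ ⊤ := ENNReal.natCast_ne_top _

theorem weight_le_add (ℓ ℓ' : Fin d → ℤ) (i k j : ℕ) :
    weight (ℓ, Nat.dist i j) ≤ weight (ℓ - ℓ', Nat.dist i k) + weight (ℓ', Nat.dist k j) := by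
  simp only [weight]
  exact_mod_cast (wt_mono_right ℓ (Nat.dist.triangle_inequality i k j)).trans
    (by simpa using wt_add_le (ℓ - ℓ') ℓ' (Nat.dist i k) (Nat.dist k j))

theorem tsum_weight_rpow_inv_ne_top {r : ℝ} (hr : (d : ℝ) + 1 < r) :
    ∑' p : (Fin d → ℤ) × ℕ, (weight p ^ r)⁻¹ ≠ ⊤ := by
  set t := r / (d + 1)
  have ht : 1 < t := by rw [one_lt_div (by positivity)]; exact hr
  let β (n : ℕ) : ℝ≥0∞ := (((max n 1 : ℕ) : ℝ≥0∞) ^ t)⁻¹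
  have hβ {n : ℕ} {p : (Fin d → ℤ) × ℕ} (hn : max n 1 ≤ wt p.1 p.2) :
      (weight p ^ t)⁻¹ ≤ β n :=
    ENNReal.inv_le_inv.2 <|
      ENNReal.rpow_le_rpow (by simp only [weight]; exact_mod_cast hn) (by linarith)
  -- `⟨ℓ, h⟩ ^ r` dominates `∏ᵢ max (|ℓᵢ|, 1) ^ t * max (h, 1) ^ t`, so the sum over `ℤᵈ × ℕ`
  -- is bounded by a product of one-dimensional `p`-series.
  have hprod (p : (Fin d → ℤ) × ℕ) : (weight p ^ r)⁻¹ ≤ (∏ i, β (p.1 i).natAbs) * β p.2 := by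
    have hr' : r = t * ((d + 1 : ℕ) : ℝ) := by simp only [t]; push_cast; field_simp
    have hpow : (weight p ^ t)⁻¹ ^ d = ∏ _i : Fin d, (weight p ^ t)⁻¹ := by simp
    rw [hr', ENNReal.rpow_mul, ENNReal.rpow_natCast, ENNReal.inv_pow, pow_succ, hpow]
    exact mul_le_mul' (Finset.prod_le_prod' fun i _ => hβ (max_natAbs_one_le_wt p.1 p.2 i))
      (hβ (max_one_le_wt p.1 p.2))
  have hβℤ : ∑' m : ℤ, β m.natAbs ≤ 2 * ∑' n, β n :=
    ENNReal.tsum_comp_le_two_mul_tsum β Int.natAbs {m | 0 ≤ m}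
      (fun a ha b hb hab => by simp only [Set.mem_ofPred_eq] at ha hb; omega)
      (fun a ha b hb hab => by simp only [Set.mem_compl_iff, Set.mem_ofPred_eq] at ha hb; omega)
  have hβfin : ∑' n, β n ≠ ⊤ := ENNReal.tsum_max_one_rpow_inv_ne_top ht
  refine ne_top_of_le_ne_top ?_ (ENNReal.tsum_le_tsum hprod)
  rw [ENNReal.tsum_prod (f := fun (ℓ : Fin d → ℤ) (h : ℕ) => (∏ i, β (ℓ i).natAbs) * β h)]
  simp_rw [ENNReal.tsum_mul_left]
  rw [ENNReal.tsum_mul_right, ENNReal.tsum_pi_fin_prod (fun m : ℤ => β m.natAbs)]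
  exact ENNReal.mul_ne_top (ENNReal.pow_ne_top
    (ne_top_of_le_ne_top (ENNReal.mul_ne_top ENNReal.ofNat_ne_top hβfin) hβℤ)) hβfin

theorem tsum_inv_weight_rpow_sq_ne_top {s₀ : ℝ} (hs₀ : ((d : ℝ) + 1) / 2 < s₀) :
    ∑' p : (Fin d → ℤ) × ℕ, ((weight p ^ s₀)⁻¹) ^ 2 ≠ ⊤ := by
  have hsq (p : (Fin d → ℤ) × ℕ) : ((weight p ^ s₀)⁻¹) ^ 2 = (weight p ^ (2 * s₀))⁻¹ := by
    rw [← ENNReal.inv_pow, ← ENNReal.rpow_natCast, ← ENNReal.rpow_mul, mul_comm]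
    norm_num
  simpa only [hsq] using tsum_weight_rpow_inv_ne_top (d := d) (by linarith)

noncomputable def decayProfile (A : (Fin d → ℤ) → ℕ → ℕ → Matrix (Fin 2) (Fin 2) ℂ)
    (p : (Fin d → ℤ) × ℕ) : ℝ≥0∞ :=
  ⨆ ij : {q : ℕ × ℕ // Nat.dist q.1 q.2 = p.2}, blockNorm (A p.1 ij.1.1 ij.1.2)

noncomputable def weightedProfile (s : ℝ) (A : (Fin d → ℤ) → ℕ → ℕ → Matrix (Fin 2) (Fin 2) ℂ)
    (p : (Fin d → ℤ) × ℕ) : ℝ≥0∞ :=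
  weight p ^ s * decayProfile A p

theorem blockNorm_le_decayProfile (A : (Fin d → ℤ) → ℕ → ℕ → Matrix (Fin 2) (Fin 2) ℂ)
    (ℓ : Fin d → ℤ) (i j : ℕ) : blockNorm (A ℓ i j) ≤ decayProfile A (ℓ, Nat.dist i j) :=
  le_iSup (fun ij : {q : ℕ × ℕ // Nat.dist q.1 q.2 = Nat.dist i j} =>
    blockNorm (A ℓ ij.1.1 ij.1.2)) ⟨(i, j), rfl⟩

theorem decayProfile_le_weightedProfile_mul (s : ℝ)
    (A : (Fin d → ℤ) → ℕ → ℕ → Matrix (Fin 2) (Fin 2) ℂ) (p : (Fin d → ℤ) × ℕ) :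
    decayProfile A p ≤ weightedProfile s A p * (weight p ^ s)⁻¹ := by
  rw [weightedProfile, mul_comm (weight p ^ s), ENNReal.mul_inv_cancel_right]
  · exact (ENNReal.rpow_pos (weight_pos p) (weight_ne_top p)).ne'
  · exact ENNReal.rpow_ne_top_of_nonneg' (weight_pos p) (weight_ne_top p)

theorem sDecayNorm_sq (s : ℝ) (A : (Fin d → ℤ) → ℕ → ℕ → Matrix (Fin 2) (Fin 2) ℂ) :
    sDecayNorm d s A ^ 2 = ∑' p, weightedProfile s A p ^ 2 := by
  rw [sDecayNorm, ENNReal.rpow_one_half_sq]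
  refine tsum_congr fun p => ?_
  rw [weightedProfile, mul_pow, decayProfile, ENNReal.iSup_pow_of_ne_zero two_ne_zero,
    ← ENNReal.rpow_natCast, ← ENNReal.rpow_mul, mul_comm s]
  rfl

noncomputable def profileConv (u v : (Fin d → ℤ) × ℕ → ℝ≥0∞) (ℓ : Fin d → ℤ) (i j : ℕ) :
    ℝ≥0∞ :=
  ∑' q : ℕ × (Fin d → ℤ), u (ℓ - q.2, Nat.dist i q.1) * v (q.2, Nat.dist q.1 j)

theorem profileConv_comm (u v : (Fin d → ℤ) × ℕ → ℝ≥0∞) (ℓ : Fin d → ℤ) (i j : ℕ) :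
    profileConv u v ℓ i j = profileConv v u ℓ j i := by
  rw [profileConv, ← (Equiv.prodCongr (Equiv.refl ℕ) (Equiv.subLeft ℓ)).tsum_eq]
  refine tsum_congr fun q => ?_
  simp [Nat.dist_comm, mul_comm]

theorem blockNorm_matProd_le (A B : (Fin d → ℤ) → ℕ → ℕ → Matrix (Fin 2) (Fin 2) ℂ)
    (ℓ : Fin d → ℤ) (i j : ℕ) :
    blockNorm (matProd d A B ℓ i j) ≤ profileConv (decayProfile A) (decayProfile B) ℓ i j :=
  (blockNorm_tsum_le _).trans <| ENNReal.tsum_le_tsum fun _ => (blockNorm_mul_le _ _).trans <|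
    mul_le_mul' (blockNorm_le_decayProfile ..) (blockNorm_le_decayProfile ..)

theorem weight_rpow_mul_blockNorm_matProd_le {s : ℝ} (hs : 0 ≤ s)
    (A B : (Fin d → ℤ) → ℕ → ℕ → Matrix (Fin 2) (Fin 2) ℂ) (ℓ : Fin d → ℤ) (i j : ℕ) :
    weight (ℓ, Nat.dist i j) ^ s * blockNorm (matProd d A B ℓ i j) ≤
      2 ^ s * (profileConv (weightedProfile s A) (decayProfile B) ℓ i j +
        profileConv (decayProfile A) (weightedProfile s B) ℓ i j) := by
  rw [profileConv, profileConv, ← ENNReal.tsum_add, ← ENNReal.tsum_mul_left]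
  calc weight (ℓ, Nat.dist i j) ^ s * blockNorm (matProd d A B ℓ i j)
      ≤ weight (ℓ, Nat.dist i j) ^ s * profileConv (decayProfile A) (decayProfile B) ℓ i j := by
        gcongr
        exact blockNorm_matProd_le A B ℓ i j
    _ = _ := ENNReal.tsum_mul_left.symm
    _ ≤ _ := ENNReal.tsum_le_tsum fun q => by
        grw [weight_le_add ℓ q.2 i q.1 j, ENNReal.add_rpow_le_two_rpow_mul hs]
        simp only [weightedProfile]
        exact le_of_eq (by ring)

theorem tsum_comp_dist_le (f : (Fin d → ℤ) × ℕ → ℝ≥0∞) (j : ℕ) :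
    ∑' q : ℕ × (Fin d → ℤ), f (q.2, Nat.dist q.1 j) ≤ 2 * ∑' p, f p := by
  refine ENNReal.tsum_comp_le_two_mul_tsum f _ {q | q.1 ≤ j} ?_ ?_ <;>
  · rintro ⟨a, ℓ⟩ ha ⟨b, ℓ'⟩ hb hab
    simp only [Prod.mk.injEq, Nat.dist, Set.mem_ofPred_eq, Set.mem_compl_iff] at ha hb hab
    exact Prod.ext (by omega) hab.1

theorem profileConv_sq_le_of_snd_le (u : (Fin d → ℤ) × ℕ → ℝ≥0∞)
    {v V c : (Fin d → ℤ) × ℕ → ℝ≥0∞} (hv : ∀ p, v p ≤ V p * c p) (ℓ : Fin d → ℤ) (i j : ℕ) :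
    profileConv u v ℓ i j ^ 2 ≤
      2 * (∑' p, c p ^ 2) * profileConv (u · ^ 2) (V · ^ 2) ℓ i j := by
  calc profileConv u v ℓ i j ^ 2
      ≤ (∑' q : ℕ × (Fin d → ℤ), (u (ℓ - q.2, Nat.dist i q.1) * V (q.2, Nat.dist q.1 j)) *
          c (q.2, Nat.dist q.1 j)) ^ 2 := by
        gcongr
        exact ENNReal.tsum_le_tsum fun q => by rw [mul_assoc]; exact mul_le_mul_right (hv _) _
    _ ≤ profileConv (u · ^ 2) (V · ^ 2) ℓ i j *
          ∑' q : ℕ × (Fin d → ℤ), c (q.2, Nat.dist q.1 j) ^ 2 := by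
        simpa only [profileConv, mul_pow] using ENNReal.tsum_mul_sq_le
          (fun q : ℕ × (Fin d → ℤ) => u (ℓ - q.2, Nat.dist i q.1) * V (q.2, Nat.dist q.1 j))
          (fun q : ℕ × (Fin d → ℤ) => c (q.2, Nat.dist q.1 j))
    _ ≤ 2 * (∑' p, c p ^ 2) * profileConv (u · ^ 2) (V · ^ 2) ℓ i j := by
        rw [mul_comm]
        gcongr
        exact tsum_comp_dist_le (c · ^ 2) j

theorem profileConv_sq_le_of_fst_le {u U c : (Fin d → ℤ) × ℕ → ℝ≥0∞}
    (v : (Fin d → ℤ) × ℕ → ℝ≥0∞) (hu : ∀ p, u p ≤ U p * c p) (ℓ : Fin d → ℤ) (i j : ℕ) :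
    profileConv u v ℓ i j ^ 2 ≤
      2 * (∑' p, c p ^ 2) * profileConv (U · ^ 2) (v · ^ 2) ℓ i j := by
  rw [profileConv_comm, profileConv_comm (U · ^ 2)]
  exact profileConv_sq_le_of_snd_le v hu ℓ j i

theorem tsum_iSup_profileConv_le (u v : (Fin d → ℤ) × ℕ → ℝ≥0∞) :
    ∑' p : (Fin d → ℤ) × ℕ, ⨆ ij : {q : ℕ × ℕ // Nat.dist q.1 q.2 = p.2},
        profileConv u v p.1 ij.1.1 ij.1.2 ≤
      4 * ((∑' p, u p) * ∑' p, v p) := by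
  have hconv (ℓ i j) : profileConv u v ℓ i j =
      ∑' ℓ', ∑' k, u (ℓ - ℓ', Nat.dist i k) * v (ℓ', Nat.dist k j) := by
    rw [profileConv, ENNReal.tsum_prod (f := fun k ℓ' => u (ℓ - ℓ', Nat.dist i k) *
      v (ℓ', Nat.dist k j)), ENNReal.tsum_comm]
  calc ∑' p : (Fin d → ℤ) × ℕ, ⨆ ij : {q : ℕ × ℕ // Nat.dist q.1 q.2 = p.2},
        profileConv u v p.1 ij.1.1 ij.1.2
      = ∑' ℓ, ∑' h, ⨆ ij : {q : ℕ × ℕ // Nat.dist q.1 q.2 = h},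
          ∑' ℓ', ∑' k, u (ℓ - ℓ', Nat.dist ij.1.1 k) * v (ℓ', Nat.dist k ij.1.2) := by
        simp_rw [hconv]
        exact ENNReal.tsum_prod (f := fun ℓ h => ⨆ ij : {q : ℕ × ℕ // Nat.dist q.1 q.2 = h},
          ∑' ℓ', ∑' k, u (ℓ - ℓ', Nat.dist ij.1.1 k) * v (ℓ', Nat.dist k ij.1.2))
    _ ≤ ∑' ℓ, ∑' h, ∑' ℓ', ⨆ ij : {q : ℕ × ℕ // Nat.dist q.1 q.2 = h},
          ∑' k, u (ℓ - ℓ', Nat.dist ij.1.1 k) * v (ℓ', Nat.dist k ij.1.2) :=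
        ENNReal.tsum_le_tsum fun ℓ => ENNReal.tsum_le_tsum fun h => iSup_le fun ij =>
          ENNReal.tsum_le_tsum fun ℓ' => le_iSup (fun ij : {q : ℕ × ℕ // Nat.dist q.1 q.2 = h} =>
            ∑' k, u (ℓ - ℓ', Nat.dist ij.1.1 k) * v (ℓ', Nat.dist k ij.1.2)) ij
    _ = ∑' ℓ, ∑' ℓ', ∑' h, ⨆ ij : {q : ℕ × ℕ // Nat.dist q.1 q.2 = h},
          ∑' k, u (ℓ - ℓ', Nat.dist ij.1.1 k) * v (ℓ', Nat.dist k ij.1.2) :=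
        tsum_congr fun ℓ => ENNReal.tsum_comm
    _ ≤ ∑' ℓ, ∑' ℓ', 4 * ((∑' a, u (ℓ - ℓ', a)) * ∑' b, v (ℓ', b)) :=
        ENNReal.tsum_le_tsum fun ℓ => ENNReal.tsum_le_tsum fun ℓ' => tsum_iSup_dist_sum_le _ _
    _ = 4 * ((∑' p, u p) * ∑' p, v p) := by
        simp_rw [ENNReal.tsum_mul_left]
        rw [ENNReal.tsum_tsum_sub_mul (fun m => ∑' a, u (m, a)) (fun m => ∑' b, v (m, b)),
          ENNReal.tsum_prod (f := fun m a => u (m, a)),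
          ENNReal.tsum_prod (f := fun m b => v (m, b))]

theorem sDecayNorm_matProd_sq_le {s₀ s : ℝ} (hs : 0 ≤ s)
    (A B : (Fin d → ℤ) → ℕ → ℕ → Matrix (Fin 2) (Fin 2) ℂ) :
    sDecayNorm d s (matProd d A B) ^ 2 ≤
      16 * (2 ^ s) ^ 2 * (∑' p : (Fin d → ℤ) × ℕ, ((weight p ^ s₀)⁻¹) ^ 2) *
        (sDecayNorm d s A ^ 2 * sDecayNorm d s₀ B ^ 2 +
          sDecayNorm d s₀ A ^ 2 * sDecayNorm d s B ^ 2) := by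
  set K := ∑' p : (Fin d → ℤ) × ℕ, ((weight p ^ s₀)⁻¹) ^ 2
  set P := profileConv (weightedProfile s A · ^ 2) (weightedProfile s₀ B · ^ 2)
  set Q := profileConv (weightedProfile s₀ A · ^ 2) (weightedProfile s B · ^ 2)
  have hpt (ℓ : Fin d → ℤ) (i j : ℕ) :
      (weight (ℓ, Nat.dist i j) ^ s * blockNorm (matProd d A B ℓ i j)) ^ 2 ≤
        4 * (2 ^ s) ^ 2 * K * (P ℓ i j + Q ℓ i j) := by
    have hX := profileConv_sq_le_of_snd_le (weightedProfile s A)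
      (decayProfile_le_weightedProfile_mul s₀ B) ℓ i j
    have hY := profileConv_sq_le_of_fst_le (weightedProfile s B)
      (decayProfile_le_weightedProfile_mul s₀ A) ℓ i j
    grw [weight_rpow_mul_blockNorm_matProd_le hs A B ℓ i j, mul_pow, ENNReal.add_sq_le_two_mul,
      hX, hY]
    exact le_of_eq (by ring)
  have hsup (p : (Fin d → ℤ) × ℕ) : weightedProfile s (matProd d A B) p ^ 2 ≤
      4 * (2 ^ s) ^ 2 * K * ((⨆ ij : {q : ℕ × ℕ // Nat.dist q.1 q.2 = p.2}, P p.1 ij.1.1 ij.1.2) +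
        ⨆ ij : {q : ℕ × ℕ // Nat.dist q.1 q.2 = p.2}, Q p.1 ij.1.1 ij.1.2) := by
    obtain ⟨ℓ, h⟩ := p
    rw [weightedProfile, decayProfile, ENNReal.mul_iSup, ENNReal.iSup_pow_of_ne_zero two_ne_zero]
    refine iSup_le ?_
    rintro ⟨⟨i, j⟩, rfl : Nat.dist i j = h⟩
    refine (hpt ℓ i j).trans ?_
    gcongr
    · exact le_iSup (fun ij : {q : ℕ × ℕ // Nat.dist q.1 q.2 = Nat.dist i j} =>
        P ℓ ij.1.1 ij.1.2) ⟨(i, j), rfl⟩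
    · exact le_iSup (fun ij : {q : ℕ × ℕ // Nat.dist q.1 q.2 = Nat.dist i j} =>
        Q ℓ ij.1.1 ij.1.2) ⟨(i, j), rfl⟩
  simp only [sDecayNorm_sq]
  grw [ENNReal.tsum_le_tsum hsup, ENNReal.tsum_mul_left, ENNReal.tsum_add,
    tsum_iSup_profileConv_le, tsum_iSup_profileConv_le]
  exact le_of_eq (by ring)

theorem sDecayNorm_matProd_le {s₀ s : ℝ} (hs : 0 ≤ s)
    (A B : (Fin d → ℤ) → ℕ → ℕ → Matrix (Fin 2) (Fin 2) ℂ) :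
    sDecayNorm d s (matProd d A B) ≤
      (16 * (2 ^ s) ^ 2 * ∑' p : (Fin d → ℤ) × ℕ, ((weight p ^ s₀)⁻¹) ^ 2) ^ (1 / 2 : ℝ) *
        (sDecayNorm d s₀ A * sDecayNorm d s B + sDecayNorm d s A * sDecayNorm d s₀ B) := by
  rw [← ENNReal.pow_le_pow_left_iff two_ne_zero, mul_pow, ENNReal.rpow_one_half_sq]
  refine (sDecayNorm_matProd_sq_le (s₀ := s₀) hs A B).trans ?_
  gcongr
  rw [add_comm, ← mul_pow, ← mul_pow]
  exact pow_add_pow_le zero_le zero_le two_ne_zero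

end

/-- Tame product estimate for the `s`-decay norm. -/
theorem stmt_11 (d : ℕ) (s₀ s : ℝ) (hs₀ : ((d : ℝ) + 1) / 2 < s₀) (hs : s₀ ≤ s) :
    ∃ C : ℝ, 0 < C ∧
      ∀ A B : (Fin d → ℤ) → ℕ → ℕ → Matrix (Fin 2) (Fin 2) ℂ,
        sDecayNorm d s (matProd d A B) ≤
          ENNReal.ofReal C *
            (sDecayNorm d s₀ A * sDecayNorm d s B +
              sDecayNorm d s A * sDecayNorm d s₀ B) := by
  have hs' : 0 ≤ s := by linarith [(by positivity : (0 : ℝ) ≤ ((d : ℝ) + 1) / 2)]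
  set c := (16 * (2 ^ s) ^ 2 * ∑' p : (Fin d → ℤ) × ℕ, ((weight p ^ s₀)⁻¹) ^ 2) ^ (1 / 2 : ℝ)
  have hc : c ≠ ⊤ := ENNReal.rpow_ne_top_of_nonneg (by norm_num) <|
    ENNReal.mul_ne_top (ENNReal.mul_ne_top ENNReal.ofNat_ne_top
      (ENNReal.pow_ne_top (ENNReal.rpow_ne_top_of_nonneg hs' ENNReal.ofNat_ne_top)))
      (tsum_inv_weight_rpow_sq_ne_top hs₀)
  refine ⟨c.toReal + 1, by positivity, fun A B =>
    (sDecayNorm_matProd_le (s₀ := s₀) hs' A B).trans ?_⟩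
  gcongr
  calc c = ENNReal.ofReal c.toReal := (ENNReal.ofReal_toReal hc).symm
    _ ≤ ENNReal.ofReal (c.toReal + 1) := ENNReal.ofReal_le_ofReal (by linarith)
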